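/- Let T be a tree with independence number α, let v be a vertex of T adjacent to at least two endvertices, and let T' be obtained from T by deleting v and all its children endvertex neighbors (i.e., deleting v together with its k ≥ 2 endvertex neighbors). Then every maximum independent set of T contains all those endvertices and does not contain v, and the number of maximum independent sets of T equals the number of maximum independent sets of T'. -/

import Mathlib

open SimpleGraph

/-- A set of vertices is independent if its vertices are pairwise non-adjacent. -/
def SimpleGraph.IsIndepSet' {V : Type*} (G : SimpleGraph V) (s : Set V) : Prop :=
  s.Pairwise (fun u v => ¬ G.Adj u v)

/-- The independence number of a graph. -/
noncomputable def indepNum {V : Type*} (G : SimpleGraph V) : ℕ :=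
  sSup {k | ∃ s : Finset V, G.IsIndepSet' ↑s ∧ s.card = k}

/-- The number of maximum independent sets of a graph. -/
noncomputable def numMaxIndep {V : Type*} (G : SimpleGraph V) : ℕ :=
  {s : Finset V | G.IsIndepSet' ↑s ∧ s.card = _root_.indepNum G}.ncard

/-!
If `v` lay in a maximum independent set `s`, exchanging `v` for its `k ≥ 2` pendant neighbours
would give a larger independent set; so `v ∉ s`, and then maximality forces every pendant
neighbour of `v` into `s`. Hence the maximum independent sets of `T` are exactly the sets `t ∪ L`
with `t` a maximum independent set of `T' = T - v - L`, and `α(T) = α(T') + k`.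
-/

open Finset

lemma SimpleGraph.isIndepSet'_iff {V : Type*} {G : SimpleGraph V} {s : Set V} :
    G.IsIndepSet' s ↔ G.IsIndepSet s :=
  Iff.rfl

lemma indepNum_eq_indepNum {V : Type*} (G : SimpleGraph V) : _root_.indepNum G = G.indepNum := by
  simp only [_root_.indepNum, SimpleGraph.indepNum, isNIndepSet_iff, isIndepSet'_iff]

namespace SimpleGraph

variable {V : Type*} {G : SimpleGraph V}

lemma isMaximumIndepSet_iff_card_eq [Finite V] {s : Finset V} :
    G.IsMaximumIndepSet s ↔ G.IsIndepSet s ∧ #s = G.indepNum :=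
  ⟨fun h => ⟨h.isIndepSet, maximumIndepSet_card_eq_indepNum s h⟩,
    fun ⟨hs, hcard⟩ => ⟨hs, fun _ ht => hcard ▸ ht.card_le_indepNum⟩⟩

lemma IsMaximumIndepSet.mem_of_forall_adj_notMem [Finite V] [DecidableEq V] {s : Finset V}
    {u : V} (hs : G.IsMaximumIndepSet s) (hu : ∀ w, G.Adj u w → w ∉ s) : u ∈ s := by
  by_contra hus
  have hindep : G.IsIndepSet ↑(insert u s) := by
    rw [coe_insert]
    exact hs.isIndepSet.insert fun w hw _ => ⟨fun h => hu w h hw, fun h => hu w h.symm hw⟩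
  have := hs.maximum _ hindep
  rw [card_insert_of_notMem hus] at this
  omega

lemma isIndepSet_induce_iff {W : Set V} {t : Finset W} :
    (G.induce W).IsIndepSet ↑t ↔ G.IsIndepSet ↑(t.map (Function.Embedding.subtype (· ∈ W))) := by
  simp [Set.Pairwise]

section Pendant

variable {v : V} {L : Finset V}

lemma neighborSet_eq_singleton_of_ncard_eq_one {u : V} (hadj : G.Adj u v)
    (h : (G.neighborSet u).ncard = 1) : G.neighborSet u = {v} := by
  obtain ⟨w, hw⟩ := Set.ncard_eq_one.1 h
  have hv : v ∈ ({w} : Set V) := hw ▸ hadj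
  rw [hw, Set.mem_singleton_iff.1 hv]

lemma notMem_of_pendant (hL : ∀ u ∈ L, G.neighborSet u = {v}) : v ∉ L := fun hv =>
  G.loopless.irrefl v ((hL v hv).ge rfl)

lemma eq_of_pendant (hL : ∀ u ∈ L, G.neighborSet u = {v}) {u w : V} (hu : u ∈ L)
    (hadj : G.Adj u w) : w = v :=
  (hL u hu).le hadj

variable [DecidableEq V]

lemma isIndepSet_union_pendant_iff (hL : ∀ u ∈ L, G.neighborSet u = {v}) {t : Finset V}
    (hv : v ∉ t) : G.IsIndepSet ↑(t ∪ L) ↔ G.IsIndepSet ↑t := by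
  refine ⟨fun h => h.mono (by simp), fun ht => ?_⟩
  rw [coe_union, isIndepSet_iff, Set.pairwise_union]
  refine ⟨ht, fun a ha b hb _ hab => notMem_of_pendant hL (eq_of_pendant hL ha hab ▸ hb),
    fun a ha b hb _ => ⟨fun hab => hv (eq_of_pendant hL hb hab.symm ▸ ha),
      fun hba => hv (eq_of_pendant hL hb hba ▸ ha)⟩⟩

variable [Finite V] {s : Finset V}

lemma IsMaximumIndepSet.notMem_of_pendant (hL : ∀ u ∈ L, G.neighborSet u = {v})
    (hk : 2 ≤ #L) (hs : G.IsMaximumIndepSet s) : v ∉ s := by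
  intro hvs
  have hdisj : Disjoint (s.erase v) L := Finset.disjoint_left.2 fun {u} hus huL =>
    hs.isIndepSet (mem_of_mem_erase hus) hvs (ne_of_mem_erase hus) ((hL u huL).ge rfl)
  have hindep : G.IsIndepSet ↑(s.erase v ∪ L) :=
    (isIndepSet_union_pendant_iff hL (notMem_erase v s)).2 (hs.isIndepSet.mono (by simp))
  have := hs.maximum _ hindep
  rw [card_union_of_disjoint hdisj, card_erase_of_mem hvs] at this
  have := card_pos.2 ⟨v, hvs⟩
  omega

lemma IsMaximumIndepSet.subset_of_pendant (hL : ∀ u ∈ L, G.neighborSet u = {v})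
    (hk : 2 ≤ #L) (hs : G.IsMaximumIndepSet s) : L ⊆ s := fun _ hu =>
  hs.mem_of_forall_adj_notMem fun _ hadj =>
    eq_of_pendant hL hu hadj ▸ hs.notMem_of_pendant hL hk

end Pendant

section DeletePendants

variable {v : V} {L : Finset V}

lemma disjoint_map_subtype_compl (t : Finset ↥(({v} ∪ (L : Set V))ᶜ)) :
    Disjoint (t.map (Function.Embedding.subtype _)) L :=
  Finset.disjoint_left.2 fun {_} hx hxL => property_of_mem_map_subtype t hx (Or.inr hxL)

variable [DecidableEq V]

def addPendants (v : V) (L : Finset V) (t : Finset ↥(({v} ∪ (L : Set V))ᶜ)) : Finset V :=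
  t.map (Function.Embedding.subtype _) ∪ L

lemma card_addPendants (t : Finset ↥(({v} ∪ (L : Set V))ᶜ)) :
    #(addPendants v L t) = #t + #L := by
  rw [addPendants, card_union_of_disjoint (disjoint_map_subtype_compl t), card_map]

lemma addPendants_injective : Function.Injective (addPendants v L) := fun t₁ t₂ h => by
  have := congrArg (· \ L) h
  simp only [addPendants, union_sdiff_cancel_right (disjoint_map_subtype_compl _)] at this
  exact Finset.map_injective _ this

lemma addPendants_subtype {s : Finset V} (hv : v ∉ s) (hLs : L ⊆ s) :
    addPendants v L (s.subtype (· ∈ ({v} ∪ (L : Set V))ᶜ)) = s := by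
  have : s.filter (· ∈ ({v} ∪ (L : Set V))ᶜ) = s \ L := by
    ext x
    by_cases hxv : x = v <;> simp_all
  rw [addPendants, subtype_map, this, sdiff_union_of_subset hLs]

lemma isIndepSet_addPendants_iff (hL : ∀ u ∈ L, G.neighborSet u = {v})
    {t : Finset ↥(({v} ∪ (L : Set V))ᶜ)} :
    G.IsIndepSet ↑(addPendants v L t) ↔ (G.induce ({v} ∪ (L : Set V))ᶜ).IsIndepSet ↑t := by
  rw [addPendants, isIndepSet_union_pendant_iff hL, isIndepSet_induce_iff]
  exact notMem_map_subtype_of_not_property t fun h => h (Or.inl rfl)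

end DeletePendants

section Count

variable [DecidableEq V] [Finite V] {v : V} {L : Finset V}

lemma IsMaximumIndepSet.exists_addPendants_eq (hL : ∀ u ∈ L, G.neighborSet u = {v})
    (hk : 2 ≤ #L) {s : Finset V} (hs : G.IsMaximumIndepSet s) : ∃ t, addPendants v L t = s :=
  ⟨_, addPendants_subtype (hs.notMem_of_pendant hL hk) (hs.subset_of_pendant hL hk)⟩

lemma indepNum_eq_indepNum_induce_add (hL : ∀ u ∈ L, G.neighborSet u = {v}) (hk : 2 ≤ #L) :
    G.indepNum = (G.induce ({v} ∪ (L : Set V))ᶜ).indepNum + #L := by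
  apply le_antisymm
  · obtain ⟨s, hs⟩ := G.maximumIndepSet_exists
    obtain ⟨t, rfl⟩ := hs.exists_addPendants_eq hL hk
    rw [← maximumIndepSet_card_eq_indepNum _ hs, card_addPendants]
    exact Nat.add_le_add_right ((isIndepSet_addPendants_iff hL).1 hs.isIndepSet).card_le_indepNum _
  · obtain ⟨t, ht⟩ := (G.induce ({v} ∪ (L : Set V))ᶜ).maximumIndepSet_exists
    rw [← maximumIndepSet_card_eq_indepNum _ ht, ← card_addPendants]
    exact ((isIndepSet_addPendants_iff hL).2 ht.isIndepSet).card_le_indepNum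

lemma isMaximumIndepSet_addPendants_iff (hL : ∀ u ∈ L, G.neighborSet u = {v}) (hk : 2 ≤ #L)
    {t : Finset ↥(({v} ∪ (L : Set V))ᶜ)} :
    G.IsMaximumIndepSet (addPendants v L t) ↔
      (G.induce ({v} ∪ (L : Set V))ᶜ).IsMaximumIndepSet t := by
  rw [isMaximumIndepSet_iff_card_eq, isMaximumIndepSet_iff_card_eq, isIndepSet_addPendants_iff hL,
    card_addPendants, indepNum_eq_indepNum_induce_add hL hk, Nat.add_right_cancel_iff]

lemma ncard_isMaximumIndepSet_induce_pendant (hL : ∀ u ∈ L, G.neighborSet u = {v})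
    (hk : 2 ≤ #L) :
    {s : Finset V | G.IsMaximumIndepSet s}.ncard =
      {t | (G.induce ({v} ∪ (L : Set V))ᶜ).IsMaximumIndepSet t}.ncard := by
  have : {s : Finset V | G.IsMaximumIndepSet s} =
      addPendants v L '' {t | (G.induce ({v} ∪ (L : Set V))ᶜ).IsMaximumIndepSet t} := by
    ext s
    refine ⟨fun hs => ?_, ?_⟩
    · obtain ⟨t, rfl⟩ := IsMaximumIndepSet.exists_addPendants_eq hL hk hs
      exact ⟨t, (isMaximumIndepSet_addPendants_iff hL hk).1 hs, rfl⟩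
    · rintro ⟨t, ht, rfl⟩
      exact (isMaximumIndepSet_addPendants_iff hL hk).2 ht
  rw [this, Set.ncard_image_of_injective _ addPendants_injective]

end Count

end SimpleGraph

lemma numMaxIndep_eq_ncard {V : Type*} [Finite V] (G : SimpleGraph V) :
    numMaxIndep G = {s : Finset V | G.IsMaximumIndepSet s}.ncard := by
  simp only [numMaxIndep, isMaximumIndepSet_iff_card_eq, isIndepSet'_iff, indepNum_eq_indepNum]

theorem stmt18_general {V : Type*} [Fintype V] (T : SimpleGraph V) (v : V)
    (L : Set V) (hL : L = {u : V | T.Adj v u ∧ (T.neighborSet u).ncard = 1})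
    (hk : 2 ≤ L.ncard) :
    (∀ s : Finset V, T.IsIndepSet' ↑s → s.card = _root_.indepNum T →
      (∀ u ∈ L, u ∈ s) ∧ v ∉ s) ∧
    numMaxIndep T = numMaxIndep (T.induce ({v} ∪ L)ᶜ) := by
  classical
  obtain ⟨L, rfl⟩ := L.toFinite.exists_finset_coe
  rw [Set.ncard_coe_finset] at hk
  have hpend : ∀ u ∈ L, T.neighborSet u = {v} := fun u hu => by
    obtain ⟨hadj, hdeg⟩ := hL.subset hu
    exact neighborSet_eq_singleton_of_ncard_eq_one hadj.symm hdeg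
  refine ⟨fun s hs hcard => ?_, ?_⟩
  · have hmax : T.IsMaximumIndepSet s :=
      isMaximumIndepSet_iff_card_eq.2 ⟨hs, hcard.trans (indepNum_eq_indepNum T)⟩
    exact ⟨hmax.subset_of_pendant hpend hk, hmax.notMem_of_pendant hpend hk⟩
  · rw [numMaxIndep_eq_ncard, numMaxIndep_eq_ncard, ncard_isMaximumIndepSet_induce_pendant hpend hk]

theorem stmt18 {V : Type*} [Fintype V] (T : SimpleGraph V) (hT : T.IsTree) (v : V)
    (L : Set V) (hL : L = {u : V | T.Adj v u ∧ (T.neighborSet u).ncard = 1})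
    (hk : 2 ≤ L.ncard) (hother : (T.neighborSet v \ L).ncard = 1) :
    (∀ s : Finset V, T.IsIndepSet' ↑s → s.card = _root_.indepNum T →
      (∀ u ∈ L, u ∈ s) ∧ v ∉ s) ∧
    numMaxIndep T = numMaxIndep (T.induce ({v} ∪ L)ᶜ) :=
  stmt18_general T v L hL hk
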